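/- Let g ≥ 1 be an integer and let Z be a symmetric g×g complex matrix whose imaginary part Im Z is positive definite. Then for every z ∈ ℂ^g, the family of complex numbers n ↦ exp(πi·ᵗn·Z·n + 2πi·ᵗn·z), indexed by n ∈ ℤ^g, is summable (the defining series of the Riemann theta function converges absolutely). -/

import Mathlib

/-- The general term of the defining series of the Riemann theta function. -/
noncomputable def riemannThetaTerm {g : ℕ} (Z : Matrix (Fin g) (Fin g) ℂ)
    (z : Fin g → ℂ) (n : Fin g → ℤ) : ℂ :=
  Complex.exp ((Real.pi : ℂ) * Complex.I * (∑ j, ∑ k, (n j : ℂ) * Z j k * (n k : ℂ)) +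
    2 * (Real.pi : ℂ) * Complex.I * (∑ j, (n j : ℂ) * z j))

/-!
Positive definiteness of `Im Z` gives `c > 0` with `Im (ᵗn Z n) ≥ c ∑ nⱼ²` (the form attains a
positive minimum on the compact unit sphere). Hence the `n`-th term has norm at most
`∏ⱼ exp (-π (c nⱼ² - 2 |Im zⱼ| |nⱼ|))`, a product of one-variable Jacobi theta bounds, each of
which is summable over `ℤ`; a product of nonnegative summable families is summable over `ℤ^g`.
-/

open scoped Real
open Matrix

lemma dotProduct_mulVec_smul_smul {ι : Type*} [Fintype ι] (Y : Matrix ι ι ℝ) (t : ℝ)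
    (x : ι → ℝ) : (t • x) ⬝ᵥ Y *ᵥ (t • x) = t ^ 2 * (x ⬝ᵥ Y *ᵥ x) := by
  simp only [mulVec_smul, dotProduct_smul, smul_dotProduct, smul_eq_mul]
  ring

lemma Matrix.PosDef.exists_pos_mul_dotProduct_self_le {ι : Type*} [Fintype ι]
    {Y : Matrix ι ι ℝ} (hY : Y.PosDef) :
    ∃ c > 0, ∀ x : ι → ℝ, c * (x ⬝ᵥ x) ≤ x ⬝ᵥ Y *ᵥ x := by
  set ratio : (ι → ℝ) → ℝ := fun x ↦ (x ⬝ᵥ Y *ᵥ x) / (x ⬝ᵥ x)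
  have hself_pos : ∀ {x : ι → ℝ}, x ≠ 0 → 0 < x ⬝ᵥ x := fun hx ↦
    lt_of_le_of_ne (dotProduct_self_star_nonneg _) (Ne.symm (dotProduct_self_eq_zero.not.mpr hx))
  have hsphere : ∀ x ∈ Metric.sphere (0 : ι → ℝ) 1, x ≠ 0 := fun x hx h ↦ by
    simp [h] at hx
  have hcont : ContinuousOn ratio (Metric.sphere 0 1) :=
    ContinuousOn.div (by fun_prop) (by fun_prop) fun x hx ↦ (hself_pos (hsphere x hx)).ne'
  obtain ⟨c, hc, hmin⟩ := (isCompact_sphere (0 : ι → ℝ) 1).exists_forall_le' hcont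
    fun x hx ↦ div_pos (by simpa using hY.dotProduct_mulVec_pos (hsphere x hx))
      (hself_pos (hsphere x hx))
  refine ⟨c, hc, fun x ↦ ?_⟩
  rcases eq_or_ne x 0 with rfl | hx
  · simp
  -- `ratio` is invariant under scaling, so its minimum on the unit sphere bounds it everywhere
  have hscale : ratio (‖x‖⁻¹ • x) = ratio x := by
    have : ‖x‖⁻¹ ≠ 0 := inv_ne_zero (norm_ne_zero_iff.mpr hx)
    simp only [ratio]
    rw [dotProduct_mulVec_smul_smul, smul_dotProduct, dotProduct_smul, smul_eq_mul, smul_eq_mul,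
      ← mul_assoc, ← sq, mul_div_mul_left _ _ (pow_ne_zero 2 this)]
  have hunit := hmin (‖x‖⁻¹ • x) (mem_sphere_zero_iff_norm.mpr (norm_smul_inv_norm (𝕜 := ℝ) hx))
  rwa [hscale, le_div_iff₀ (hself_pos hx)] at hunit

lemma summable_pi_prod_of_nonneg {α : Type*} :
    ∀ {n : ℕ} {f : Fin n → α → ℝ}, (∀ i, 0 ≤ f i) → (∀ i, Summable (f i)) →
      Summable fun x : Fin n → α ↦ ∏ i, f i (x i)
  | 0, _, _, _ => Summable.of_finite
  | n + 1, f, hf_nonneg, hf => by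
    have hsplit := (hf 0).mul_of_nonneg
      (summable_pi_prod_of_nonneg (fun i ↦ hf_nonneg i.succ) fun i ↦ hf i.succ) (hf_nonneg 0)
      fun x ↦ Finset.prod_nonneg fun i _ ↦ hf_nonneg i.succ (x i)
    rw [← (Fin.consEquiv fun _ ↦ α).summable_iff]
    simpa [Function.comp_def, Fin.prod_univ_succ] using hsplit

lemma norm_riemannThetaTerm {g : ℕ} (Z : Matrix (Fin g) (Fin g) ℂ) (z : Fin g → ℂ)
    (n : Fin g → ℤ) :
    ‖riemannThetaTerm Z z n‖ = Real.exp (-π * ((Int.cast ∘ n) ⬝ᵥ Z.map Complex.im *ᵥ (Int.cast ∘ n))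
      - 2 * π * ((Int.cast ∘ n) ⬝ᵥ fun j ↦ (z j).im)) := by
  rw [riemannThetaTerm, Complex.norm_exp]
  congr 1
  simp [dotProduct, mulVec, Complex.mul_re, Complex.mul_im, Finset.mul_sum, mul_assoc,
    sub_eq_add_neg]

lemma norm_riemannThetaTerm_le {g : ℕ} {Z : Matrix (Fin g) (Fin g) ℂ} {c : ℝ}
    (hc : ∀ x, c * (x ⬝ᵥ x) ≤ x ⬝ᵥ Z.map Complex.im *ᵥ x) (z : Fin g → ℂ) (n : Fin g → ℤ) :
    ‖riemannThetaTerm Z z n‖ ≤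
      ∏ j, Real.exp (-π * (c * n j ^ 2 - 2 * |(z j).im| * |(n j : ℝ)|)) := by
  rw [norm_riemannThetaTerm, ← Real.exp_sum, Real.exp_le_exp]
  set v : Fin g → ℝ := Int.cast ∘ n
  set y : Fin g → ℝ := fun j ↦ (z j).im
  have hlinear : -(v ⬝ᵥ y) ≤ ∑ j, |y j| * |v j| :=
    (neg_le_abs _).trans <| (Finset.abs_sum_le_sum_abs _ _).trans_eq <| by
      simp only [abs_mul, mul_comm]
  have hsum : ∑ j, -π * (c * n j ^ 2 - 2 * |(z j).im| * |(n j : ℝ)|)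
      = -π * (c * (v ⬝ᵥ v)) + 2 * π * ∑ j, |y j| * |v j| := by
    simp only [dotProduct, Finset.mul_sum, ← Finset.sum_add_distrib]
    exact Finset.sum_congr rfl fun j _ ↦ by simp only [v, y, Function.comp_apply]; ring
  rw [hsum]
  have hquad := mul_le_mul_of_nonneg_left (hc v) Real.pi_pos.le
  have hlin := mul_le_mul_of_nonneg_left hlinear Real.two_pi_pos.le
  linarith

theorem riemannTheta_summable_general (g : ℕ)
    (Z : Matrix (Fin g) (Fin g) ℂ)
    (hZim : (Z.map Complex.im).PosDef) (z : Fin g → ℂ) :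
    Summable (fun n : Fin g → ℤ => riemannThetaTerm Z z n) := by
  obtain ⟨c, hc, hcoercive⟩ := hZim.exists_pos_mul_dotProduct_self_le
  have hbound := summable_pi_prod_of_nonneg (fun j n ↦ (Real.exp_pos _).le) fun j ↦ by
    simpa only [pow_zero, one_mul, Int.cast_abs] using
      summable_pow_mul_jacobiTheta₂_term_bound |(z j).im| hc 0
  exact .of_norm_bounded hbound (norm_riemannThetaTerm_le hcoercive z)

theorem riemannTheta_summable (g : ℕ) (hg : 1 ≤ g)
    (Z : Matrix (Fin g) (Fin g) ℂ) (hZsymm : Z.IsSymm)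
    (hZim : (Z.map Complex.im).PosDef) (z : Fin g → ℂ) :
    Summable (fun n : Fin g → ℤ => riemannThetaTerm Z z n) :=
  riemannTheta_summable_general g Z hZim z
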